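/- arXiv:1312.2794 — 2 statements merged into one kernel-verified Lean document; each statement's English description precedes it below -/
import Mathlib

section
/- Under the assumptions of the penalization estimate (D ⊆ ℝ^d open convex, a ∈ D, d_a = dist(a, ∂D), y càdlàg with y(0) ∈ closure D, x^n solving the penalized equation x^n = y + k^n with k^n_t = -n∫_0^t (x^n_s - Π(x^n_s)) ds, and ω'_y(δ, q) < d_a/2), the total variation of k^n on [0,q] satisfies |k^n|_q ≤ 55 (⌊q/δ⌋ + 1)^3 d_a^{-1} sup_{t ≤ q} |y_t - a|². -/
/-!
With `ρ = dist(a, ∂D)`, the ball `closedBall a ρ` lies in `closure D`, so the projection satisfies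
`ρ ‖z - Π z‖ ≤ ⟪z - Π z, z - a⟫`. On an interval `[u, v)` on which `y` oscillates less than `ρ / 2`,
`Z t = x t - a - (y t - y u)` is absolutely continuous with `Z' = -n (x - Π x)` a.e., hence
`(‖Z‖²)' ≤ -n ρ ‖x - Π x‖` a.e. Integrating gives `n ρ ∫_u^v ‖x - Π x‖ ≤ ‖x u - a‖²` and
`‖x v - a‖ ≤ ‖x u - a‖ + ‖y v - y u‖`. Along the subdivision witnessing `ω'_y(δ, q) < ρ / 2`, which
has `r ≤ ⌊q / δ⌋ + 1` pieces, this yields `‖x (σ i) - a‖ ≤ (2 i + 1) M` with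
`M = sup_{[0, q]} ‖y - a‖`, and summing, `n ρ ∫_0^q ‖x - Π x‖ ≤ 4 r³ M²`.
-/

open scoped RealInnerProductSpace
open MeasureTheory Set Filter

variable {d : ℕ}

/-- A càdlàg function on `[0,∞)`: right-continuous with left limits. -/
def Cadlag (f : ℝ → EuclideanSpace ℝ (Fin d)) : Prop :=
  (∀ t : ℝ, 0 ≤ t → ContinuousWithinAt f (Set.Ici t) t) ∧
  (∀ t : ℝ, 0 < t → ∃ l, Filter.Tendsto f (nhdsWithin t (Set.Iio t)) (nhds l))

/-- `proj` is the metric projection (nearest-point map) onto `C`. -/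
def IsProjOn (C : Set (EuclideanSpace ℝ (Fin d)))
    (proj : EuclideanSpace ℝ (Fin d) → EuclideanSpace ℝ (Fin d)) : Prop :=
  ∀ z, proj z ∈ C ∧ ∀ w ∈ C, dist z (proj z) ≤ dist z w

/-- `x` solves the penalized equation `x t = y t - c ∫_0^t (x s - proj (x s)) ds`. -/
def PenalizedSol (proj : EuclideanSpace ℝ (Fin d) → EuclideanSpace ℝ (Fin d))
    (c : ℝ) (y x : ℝ → EuclideanSpace ℝ (Fin d)) : Prop :=
  (∀ t : ℝ, 0 ≤ t → IntervalIntegrable (fun s => x s - proj (x s)) volume 0 t) ∧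
  (∀ t : ℝ, 0 ≤ t → x t = y t - c • ∫ s in (0:ℝ)..t, (x s - proj (x s)))

/-- The oscillation of `f` on `[s, t)` is `< c`. -/
def OscLtOn (f : ℝ → EuclideanSpace ℝ (Fin d)) (s t c : ℝ) : Prop :=
  ∀ u ∈ Set.Ico s t, ∀ v ∈ Set.Ico s t, ‖f u - f v‖ < c

/-- `ω'_f(δ, q) < c`: there is a subdivision `0 = s 0 < ⋯ < s r = q` whose first `r - 1`
steps have length `≥ δ` and on whose half-open intervals `f` oscillates less than `c`. -/
def OmegaPrimeLt (f : ℝ → EuclideanSpace ℝ (Fin d)) (δ q c : ℝ) : Prop :=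
  ∃ r : ℕ, 0 < r ∧ ∃ s : ℕ → ℝ, s 0 = 0 ∧ s r = q ∧
    (∀ k < r, s k < s (k + 1)) ∧ (∀ k, k + 1 < r → δ ≤ s (k + 1) - s k) ∧
    ∀ k < r, OscLtOn f (s k) (s (k + 1)) c

namespace AbsolutelyContinuousOnInterval

theorem of_dist_le {X Y : Type*} [PseudoMetricSpace X] [PseudoMetricSpace Y]
    {f : ℝ → X} {g : ℝ → Y} {a b : ℝ} (hg : AbsolutelyContinuousOnInterval g a b)
    (hfg : ∀ s ∈ uIcc a b, ∀ t ∈ uIcc a b, dist (f s) (f t) ≤ dist (g s) (g t)) :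
    AbsolutelyContinuousOnInterval f a b := by
  refine squeeze_zero' (Eventually.of_forall fun _ ↦ Finset.sum_nonneg fun _ _ ↦ dist_nonneg)
    ?_ hg
  rw [eventually_inf_principal]
  filter_upwards with E hE
  exact Finset.sum_le_sum fun i hi ↦ hfg _ (hE.1 i hi).1 _ (hE.1 i hi).2

theorem norm_sq {E : Type*} [SeminormedAddCommGroup E] [NormedSpace ℝ E] {f : ℝ → E} {a b : ℝ}
    (hf : AbsolutelyContinuousOnInterval f a b) :
    AbsolutelyContinuousOnInterval (fun t ↦ ‖f t‖ ^ 2) a b := by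
  obtain ⟨C, hC⟩ := hf.exists_bound
  refine (hf.const_smul (2 * C)).of_dist_le fun s hs t ht ↦ ?_
  have hC0 : 0 ≤ C := (norm_nonneg _).trans (hC s hs)
  rw [Real.dist_eq, dist_smul₀, Real.norm_of_nonneg (by positivity), dist_eq_norm,
    sq, sq, mul_self_sub_mul_self, abs_mul]
  calc |‖f s‖ + ‖f t‖| * |‖f s‖ - ‖f t‖| ≤ (2 * C) * ‖f s - f t‖ := by
        gcongr
        · rw [abs_of_nonneg (by positivity)]; linarith [hC s hs, hC t ht]
        · exact abs_norm_sub_norm_le _ _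

variable {f f' : ℝ → ℝ} {a b : ℝ}

theorem deriv_ae_eq_of_ae_hasDerivAt (hf' : ∀ᵐ x, x ∈ uIcc a b → HasDerivAt f (f' x) x) :
    ∀ᵐ x, x ∈ uIoc a b → deriv f x = f' x := by
  filter_upwards [hf'] with x hx hxab using (hx (uIoc_subset_uIcc hxab)).deriv

theorem intervalIntegrable_of_ae_hasDerivAt (hf : AbsolutelyContinuousOnInterval f a b)
    (hf' : ∀ᵐ x, x ∈ uIcc a b → HasDerivAt f (f' x) x) : IntervalIntegrable f' volume a b :=
  hf.intervalIntegrable_deriv.congr_ae <|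
    (ae_restrict_iff' measurableSet_uIoc).2 (deriv_ae_eq_of_ae_hasDerivAt hf')

theorem integral_eq_sub_of_ae_hasDerivAt (hf : AbsolutelyContinuousOnInterval f a b)
    (hf' : ∀ᵐ x, x ∈ uIcc a b → HasDerivAt f (f' x) x) : ∫ x in a..b, f' x = f b - f a := by
  rw [← intervalIntegral.integral_congr_ae (deriv_ae_eq_of_ae_hasDerivAt hf'),
    hf.integral_deriv_eq_sub]

end AbsolutelyContinuousOnInterval

theorem IntervalIntegrable.absolutelyContinuousOnInterval_const_add_intervalIntegral
    {E : Type*} [NormedAddCommGroup E] [NormedSpace ℝ E] {ψ : ℝ → E} {a b : ℝ} (hψ : IntervalIntegrable ψ volume a b) (z : E) :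
    AbsolutelyContinuousOnInterval (fun t ↦ z + ∫ s in a..t, ψ s) a b := by
  refine (hψ.norm.absolutelyContinuousOnInterval_intervalIntegral (c := a) left_mem_uIcc).of_dist_le
    fun s hs t ht ↦ ?_
  have hsub : ∀ r ∈ uIcc a b, IntervalIntegrable ψ volume a r := fun r hr ↦
    hψ.mono_set (uIcc_subset_uIcc_left hr)
  rw [dist_add_left, dist_eq_norm, Real.dist_eq,
    intervalIntegral.integral_interval_sub_left (hsub s hs) (hsub t ht),
    intervalIntegral.integral_interval_sub_left (hsub s hs).norm (hsub t ht).norm]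
  exact intervalIntegral.norm_integral_le_abs_integral_norm

section InnerProductSpace

variable {E : Type*} [NormedAddCommGroup E] [InnerProductSpace ℝ E]

namespace IntervalIntegrable

variable [CompleteSpace E] {ψ : ℝ → E} {u v : ℝ}

theorem ae_hasDerivAt_norm_sq_const_add_intervalIntegral (hψ : IntervalIntegrable ψ volume u v)
    (z : E) :
    ∀ᵐ s, s ∈ uIcc u v → HasDerivAt (fun t ↦ ‖z + ∫ r in u..t, ψ r‖ ^ 2)
      (2 * ⟪z + ∫ r in u..s, ψ r, ψ s⟫) s := by
  filter_upwards [hψ.ae_hasDerivAt_integral] with s hs hsuv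
  exact ((hs hsuv u left_mem_uIcc).const_add z).norm_sq

theorem intervalIntegrable_inner_const_add_intervalIntegral
    (hψ : IntervalIntegrable ψ volume u v) (z : E) :
    IntervalIntegrable (fun s ↦ ⟪z + ∫ r in u..s, ψ r, ψ s⟫) volume u v := by
  simpa using ((hψ.absolutelyContinuousOnInterval_const_add_intervalIntegral z).norm_sq
    |>.intervalIntegrable_of_ae_hasDerivAt
      (hψ.ae_hasDerivAt_norm_sq_const_add_intervalIntegral z)).const_mul 2⁻¹

theorem norm_sq_const_add_intervalIntegral (hψ : IntervalIntegrable ψ volume u v) (z : E) :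
    ‖z + ∫ s in u..v, ψ s‖ ^ 2 = ‖z‖ ^ 2 + 2 * ∫ s in u..v, ⟪z + ∫ r in u..s, ψ r, ψ s⟫ := by
  rw [← intervalIntegral.integral_const_mul,
    (hψ.absolutelyContinuousOnInterval_const_add_intervalIntegral z).norm_sq
      |>.integral_eq_sub_of_ae_hasDerivAt (hψ.ae_hasDerivAt_norm_sq_const_add_intervalIntegral z)]
  simp

end IntervalIntegrable

theorem Convex.real_inner_sub_le_zero_of_forall_dist_le {C : Set E} (hC : Convex ℝ C) {x p : E}
    (hp : p ∈ C) (hmin : ∀ w ∈ C, dist x p ≤ dist x w) {w : E} (hw : w ∈ C) :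
    ⟪x - p, w - p⟫ ≤ 0 := by
  have : Nonempty C := ⟨⟨p, hp⟩⟩
  refine (norm_eq_iInf_iff_real_inner_le_zero hC hp).1 (le_antisymm ?_ ?_) w hw
  · exact le_ciInf fun w ↦ by simpa only [dist_eq_norm] using hmin w w.2
  · exact ciInf_le ⟨0, by rintro _ ⟨w, rfl⟩; positivity⟩ (⟨p, hp⟩ : C)

theorem Convex.mul_norm_sub_le_real_inner_of_closedBall_subset {C : Set E} (hC : Convex ℝ C)
    {x p a : E} {ρ : ℝ} (hρ : 0 ≤ ρ) (hp : p ∈ C) (hmin : ∀ w ∈ C, dist x p ≤ dist x w)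
    (hball : Metric.closedBall a ρ ⊆ C) :
    ρ * ‖x - p‖ ≤ ⟪x - p, x - a⟫ := by
  rcases eq_or_ne x p with rfl | hxp
  · simp
  have hnorm : 0 < ‖x - p‖ := norm_pos_iff.2 (sub_ne_zero.2 hxp)
  -- the point of the ball lying farthest in the direction `x - p`
  set w := a + (ρ / ‖x - p‖) • (x - p)
  have hw : w ∈ C := hball <| by
    rw [Metric.mem_closedBall, dist_eq_norm, add_sub_cancel_left, norm_smul, Real.norm_eq_abs,
      abs_of_nonneg (by positivity), div_mul_cancel₀ _ hnorm.ne']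
  have hvi := hC.real_inner_sub_le_zero_of_forall_dist_le hp hmin hw
  have hwp : w - p = (ρ / ‖x - p‖) • (x - p) - (p - a) := by simp only [w]; abel
  have hxa : x - a = (x - p) + (p - a) := by abel
  rw [hwp, inner_sub_right, real_inner_smul_right, real_inner_self_eq_norm_sq] at hvi
  rw [hxa, inner_add_right, real_inner_self_eq_norm_sq]
  have : ρ / ‖x - p‖ * ‖x - p‖ ^ 2 = ρ * ‖x - p‖ := by field_simp
  nlinarith [sq_nonneg ‖x - p‖]

theorem norm_sq_add_mul_integral_le_of_penalized [CompleteSpace E] {x y g : ℝ → E} {a : E}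
    {c ρ u v : ℝ} (huv : u ≤ v) (hc : 0 ≤ c) (hg : IntervalIntegrable g volume u v)
    (hx : ∀ t ∈ Icc u v, x t = x u + (y t - y u) - c • ∫ s in u..t, g s)
    (hy : ∀ s ∈ Ico u v, ‖y s - y u‖ ≤ ρ / 2)
    (hgx : ∀ s ∈ Ico u v, ρ * ‖g s‖ ≤ ⟪g s, x s - a⟫) :
    ‖x v - a - (y v - y u)‖ ^ 2 + c * ρ * ∫ s in u..v, ‖g s‖ ≤ ‖x u - a‖ ^ 2 := by
  have hψ : IntervalIntegrable (fun s ↦ -(c • g s)) volume u v := (hg.smul c).neg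
  have hZ : ∀ t ∈ Icc u v,
      x u - a + ∫ s in u..t, -(c • g s) = x t - a - (y t - y u) := by
    intro t ht
    rw [hx t ht, intervalIntegral.integral_neg, intervalIntegral.integral_smul]
    abel
  have hpointwise : ∀ s ∈ Ioo u v,
      ⟪x u - a + ∫ r in u..s, -(c • g r), -(c • g s)⟫ ≤ -(c * ρ / 2) * ‖g s‖ := by
    intro s hs
    have hys : ⟪y s - y u, g s⟫ ≤ ρ / 2 * ‖g s‖ :=
      (real_inner_le_norm _ _).trans (by gcongr; exact hy s (Ioo_subset_Ico_self hs))
    have hxs := real_inner_comm (x s - a) (g s) ▸ hgx s (Ioo_subset_Ico_self hs)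
    rw [hZ s (Ioo_subset_Icc_self hs), inner_neg_right, real_inner_smul_right, inner_sub_left]
    nlinarith [mul_le_mul_of_nonneg_left hys hc, mul_le_mul_of_nonneg_left hxs hc]
  have hmono := intervalIntegral.integral_mono_on_of_le_Ioo huv
    (hψ.intervalIntegrable_inner_const_add_intervalIntegral (x u - a))
    (hg.norm.const_mul _) hpointwise
  rw [intervalIntegral.integral_const_mul] at hmono
  rw [← hZ v (right_mem_Icc.2 huv), hψ.norm_sq_const_add_intervalIntegral]
  linarith

end InnerProductSpace

theorem exists_mem_Ico_of_mem_Ico {α : Type*} [LinearOrder α] {σ : ℕ → α} {r : ℕ} {t : α}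
    (ht : t ∈ Ico (σ 0) (σ r)) : ∃ k < r, t ∈ Ico (σ k) (σ (k + 1)) := by
  have hex : ∃ j, t < σ j := ⟨r, ht.2⟩
  have hpos : Nat.find hex ≠ 0 := fun h ↦ (h ▸ Nat.find_spec hex).not_ge ht.1
  obtain ⟨k, hk⟩ := Nat.exists_eq_succ_of_ne_zero hpos
  have hkr := Nat.find_min' hex ht.2
  refine ⟨k, by omega, not_lt.1 (Nat.find_min hex (by omega)), ?_⟩
  simpa [hk] using Nat.find_spec hex

theorem Metric.closedBall_infDist_frontier_subset_closure {E : Type*} [NormedAddCommGroup E]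
    [NormedSpace ℝ E] {s : Set E} (hs : IsOpen s) {x : E} (hx : x ∈ s) :
    closedBall x (infDist x (frontier s)) ⊆ closure s := by
  rcases (infDist_nonneg (x := x) (s := frontier s)).eq_or_lt with h | h
  · rw [← h, closedBall_zero, singleton_subset_iff]
    exact subset_closure hx
  have hball : ball x (infDist x (frontier s)) ⊆ s := by
    refine (convex_ball x _).isPreconnected.subset_of_closure_inter_subset hs
      ⟨x, mem_ball_self h, hx⟩ ?_
    rintro z ⟨hzs, hzb⟩
    by_contra hz
    exact ball_infDist_subset_compl hzb ⟨hzs, by rwa [hs.interior_eq]⟩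
  rw [← closure_ball x h.ne']
  exact closure_mono hball

namespace OmegaPrimeLt

variable {f : ℝ → EuclideanSpace ℝ (Fin d)} {δ q c : ℝ}

theorem pos (h : OmegaPrimeLt f δ q c) : 0 < c := by
  obtain ⟨r, hr, s, -, -, hlt, -, hosc⟩ := h
  have hs : s 0 ∈ Ico (s 0) (s 1) := ⟨le_rfl, hlt 0 hr⟩
  simpa using hosc 0 hr (s 0) hs (s 0) hs

theorem bddAbove_norm_sub (h : OmegaPrimeLt f δ q c) (a : EuclideanSpace ℝ (Fin d)) :
    BddAbove (range fun t : Icc (0 : ℝ) q ↦ ‖f t - a‖) := by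
  have hc := h.pos
  obtain ⟨r, -, s, hs0, hsr, -, -, hosc⟩ := h
  refine ⟨c + ‖f q - a‖ + ∑ k ∈ Finset.range r, ‖f (s k) - a‖, ?_⟩
  rintro _ ⟨⟨t, ht0, htq⟩, rfl⟩
  have hsum_nonneg : 0 ≤ ∑ k ∈ Finset.range r, ‖f (s k) - a‖ := by positivity
  rcases htq.eq_or_lt with rfl | htq
  · linarith
  obtain ⟨k, hk, htk⟩ := exists_mem_Ico_of_mem_Ico ⟨hs0 ▸ ht0, hsr ▸ htq⟩
  have hosc_t := hosc k hk t htk (s k) ⟨le_rfl, htk.1.trans_lt htk.2⟩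
  have hk_le := Finset.single_le_sum (fun i _ ↦ norm_nonneg (f (s i) - a))
    (Finset.mem_range.2 hk)
  calc ‖f t - a‖ ≤ ‖f t - f (s k)‖ + ‖f (s k) - a‖ := norm_sub_le_norm_sub_add_norm_sub _ _ _
    _ ≤ _ := by linarith [norm_nonneg (f q - a)]

end OmegaPrimeLt

namespace PenalizedSol

variable {proj : EuclideanSpace ℝ (Fin d) → EuclideanSpace ℝ (Fin d)} {c : ℝ}
  {y x : ℝ → EuclideanSpace ℝ (Fin d)}

theorem intervalIntegrable (hx : PenalizedSol proj c y x) {u v : ℝ} (hu : 0 ≤ u) (huv : u ≤ v) :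
    IntervalIntegrable (fun s ↦ x s - proj (x s)) volume u v :=
  (hx.1 v (hu.trans huv)).mono_set <| by
    rw [uIcc_of_le huv, uIcc_of_le (hu.trans huv)]
    exact Icc_subset_Icc hu le_rfl

theorem eq_add_sub_smul_integral (hx : PenalizedSol proj c y x) {u t : ℝ} (hu : 0 ≤ u)
    (hut : u ≤ t) :
    x t = x u + (y t - y u) - c • ∫ s in u..t, (x s - proj (x s)) := by
  rw [← intervalIntegral.integral_interval_sub_left (hx.1 t (hu.trans hut)) (hx.1 u hu),
    hx.2 t (hu.trans hut), hx.2 u hu, smul_sub]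
  abel

theorem norm_sub_le_and_mul_integral_le (hx : PenalizedSol proj c y x) (hc : 0 ≤ c)
    {a : EuclideanSpace ℝ (Fin d)} {ρ : ℝ} (hρ : 0 ≤ ρ)
    (hproj : ∀ z, ρ * ‖z - proj z‖ ≤ ⟪z - proj z, z - a⟫) {u v : ℝ} (hu : 0 ≤ u) (huv : u ≤ v)
    (hy : ∀ s ∈ Ico u v, ‖y s - y u‖ ≤ ρ / 2) :
    ‖x v - a‖ ≤ ‖x u - a‖ + ‖y v - y u‖ ∧
      c * ρ * ∫ s in u..v, ‖x s - proj (x s)‖ ≤ ‖x u - a‖ ^ 2 := by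
  have hstep : ‖x v - a - (y v - y u)‖ ^ 2 + c * ρ * ∫ s in u..v, ‖x s - proj (x s)‖ ≤
      ‖x u - a‖ ^ 2 :=
    norm_sq_add_mul_integral_le_of_penalized huv hc (hx.intervalIntegrable hu huv)
      (fun _ ht ↦ hx.eq_add_sub_smul_integral hu ht.1) hy (fun s _ ↦ hproj (x s))
  have hint : 0 ≤ c * ρ * ∫ s in u..v, ‖x s - proj (x s)‖ :=
    mul_nonneg (mul_nonneg hc hρ) (intervalIntegral.integral_nonneg huv fun _ _ ↦ norm_nonneg _)
  refine ⟨?_, by nlinarith [sq_nonneg ‖x v - a - (y v - y u)‖]⟩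
  have hZ : ‖x v - a - (y v - y u)‖ ≤ ‖x u - a‖ :=
    (pow_le_pow_iff_left₀ (norm_nonneg _) (norm_nonneg _) two_ne_zero).1 (by linarith)
  calc ‖x v - a‖ ≤ ‖x v - a - (y v - y u)‖ + ‖y v - y u‖ := norm_le_norm_sub_add _ _
    _ ≤ ‖x u - a‖ + ‖y v - y u‖ := by gcongr

theorem norm_sub_le_and_mul_integral_le_of_subdivision (hx : PenalizedSol proj c y x)
    (hc : 0 ≤ c) {a : EuclideanSpace ℝ (Fin d)} {ρ M : ℝ} (hρ : 0 ≤ ρ)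
    (hproj : ∀ z, ρ * ‖z - proj z‖ ≤ ⟪z - proj z, z - a⟫) {σ : ℕ → ℝ} {m : ℕ} (hσ0 : σ 0 = 0)
    (hσ : ∀ k < m, σ k < σ (k + 1)) (hosc : ∀ k < m, OscLtOn y (σ k) (σ (k + 1)) (ρ / 2))
    (hM : ∀ k ≤ m, ‖y (σ k) - a‖ ≤ M) :
    ‖x (σ m) - a‖ ≤ (2 * m + 1) * M ∧
      c * ρ * ∫ s in (0 : ℝ)..σ m, ‖x s - proj (x s)‖ ≤ 4 * m ^ 3 * M ^ 2 := by
  induction m with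
  | zero =>
    have hx0 : x 0 = y 0 := by simpa using hx.2 0 le_rfl
    simpa [hσ0, hx0] using hM 0 le_rfl
  | succ m ih =>
    obtain ⟨ihx, ihint⟩ := ih (fun k hk ↦ hσ k (by omega)) (fun k hk ↦ hosc k (by omega))
      (fun k hk ↦ hM k (by omega))
    have hσm : 0 ≤ σ m :=
      hσ0 ▸ (strictMonoOn_Iic_of_lt_succ hσ).monotoneOn (by simp) (by simp) (Nat.zero_le m)
    have hlt := hσ m (by omega)
    obtain ⟨hxstep, hintstep⟩ := hx.norm_sub_le_and_mul_integral_le hc hρ hproj hσm hlt.le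
      fun s hs ↦ (hosc m (by omega) s hs (σ m) ⟨le_rfl, hlt⟩).le
    have hy : ‖y (σ (m + 1)) - y (σ m)‖ ≤ 2 * M := by
      have := norm_sub_le_norm_sub_add_norm_sub (y (σ (m + 1))) a (y (σ m))
      rw [norm_sub_rev a] at this
      linarith [hM (m + 1) le_rfl, hM m (by omega)]
    have hsplit : ∫ s in (0 : ℝ)..σ (m + 1), ‖x s - proj (x s)‖ =
        (∫ s in (0 : ℝ)..σ m, ‖x s - proj (x s)‖) + ∫ s in σ m..σ (m + 1), ‖x s - proj (x s)‖ :=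
      (intervalIntegral.integral_add_adjacent_intervals (hx.intervalIntegrable le_rfl hσm).norm
        (hx.intervalIntegrable hσm hlt.le).norm).symm
    have hsq : ‖x (σ m) - a‖ ^ 2 ≤ ((2 * m + 1) * M) ^ 2 := pow_le_pow_left₀ (norm_nonneg _) ihx 2
    have hgrowth : 0 ≤ (8 * (m : ℝ) ^ 2 + 8 * m + 3) * M ^ 2 := by positivity
    push_cast
    refine ⟨by linarith, ?_⟩
    rw [hsplit, mul_add]
    linarith

end PenalizedSol

theorem natCast_le_floor_div_add_one_of_le_sub {σ : ℕ → ℝ} {r : ℕ} {δ q : ℝ} (hδ : 0 < δ)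
    (hr : 0 < r) (hσ0 : σ 0 = 0) (hσr : σ r = q) (hlt : ∀ k < r, σ k < σ (k + 1))
    (hstep : ∀ k, k + 1 < r → δ ≤ σ (k + 1) - σ k) :
    (r : ℝ) ≤ ⌊q / δ⌋₊ + 1 := by
  obtain ⟨m, rfl⟩ := Nat.exists_eq_add_one_of_ne_zero hr.ne'
  have htelescope : (m : ℝ) * δ ≤ σ m - σ 0 := by
    simpa [← Finset.sum_range_sub] using
      Finset.card_nsmul_le_sum (Finset.range m) _ δ fun k hk ↦ hstep k (by simpa using hk)
  have hm : (m : ℝ) ≤ q / δ := by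
    rw [le_div_iff₀ hδ]
    linarith [hlt m (by omega)]
  push_cast
  gcongr
  exact Nat.le_floor hm

/-- The total variation of `k^n_t = -n ∫_0^t (x s - Π(x s)) ds` on `[0, q]` is
`n ∫_0^q ‖x s - Π(x s)‖ ds`. -/
theorem stmt5_general (d : ℕ) (D : Set (EuclideanSpace ℝ (Fin d)))
    (hD : IsOpen D) (hconv : Convex ℝ D)
    (a : EuclideanSpace ℝ (Fin d)) (ha : a ∈ D)
    (proj : EuclideanSpace ℝ (Fin d) → EuclideanSpace ℝ (Fin d))
    (hproj : IsProjOn (closure D) proj)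
    (y : ℝ → EuclideanSpace ℝ (Fin d))
    (n : ℕ) (x : ℝ → EuclideanSpace ℝ (Fin d))
    (hx : PenalizedSol proj (n : ℝ) y x)
    (q δ : ℝ) (hδ : 0 < δ)
    (hω : OmegaPrimeLt y δ q (Metric.infDist a (frontier D) / 2)) :
    (n : ℝ) * ∫ s in (0:ℝ)..q, ‖x s - proj (x s)‖ ≤
      55 * (⌊q / δ⌋₊ + 1) ^ 3 * (Metric.infDist a (frontier D))⁻¹ *
        (⨆ s : Set.Icc (0:ℝ) q, ‖y s - a‖) ^ 2 := by
  set ρ := Metric.infDist a (frontier D)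
  set M := ⨆ s : Set.Icc (0:ℝ) q, ‖y s - a‖
  have hρ : 0 < ρ := by linarith [hω.pos]
  have hMbdd := hω.bddAbove_norm_sub a
  obtain ⟨r, hr, σ, hσ0, hσr, hσlt, hstep, hosc⟩ := hω
  have hproj' : ∀ z, ρ * ‖z - proj z‖ ≤ ⟪z - proj z, z - a⟫ := fun z ↦
    hconv.closure.mul_norm_sub_le_real_inner_of_closedBall_subset hρ.le (hproj z).1 (hproj z).2
      (Metric.closedBall_infDist_frontier_subset_closure hD ha)
  have hσ_mem : ∀ k ≤ r, σ k ∈ Icc 0 q := fun k hk ↦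
    have hmono := (strictMonoOn_Iic_of_lt_succ hσlt).monotoneOn
    ⟨hσ0 ▸ hmono (by simp) hk (Nat.zero_le k), hσr ▸ hmono hk (by simp) hk⟩
  obtain ⟨-, hbound⟩ := hx.norm_sub_le_and_mul_integral_le_of_subdivision n.cast_nonneg hρ.le
    hproj' hσ0 hσlt hosc fun k hk ↦ le_ciSup hMbdd ⟨σ k, hσ_mem k hk⟩
  have hcount := natCast_le_floor_div_add_one_of_le_sub hδ hr hσ0 hσr hσlt hstep
  rw [hσr] at hbound
  calc (n : ℝ) * ∫ s in (0:ℝ)..q, ‖x s - proj (x s)‖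
      = (n * ρ * ∫ s in (0:ℝ)..q, ‖x s - proj (x s)‖) * ρ⁻¹ := by field_simp
    _ ≤ 4 * r ^ 3 * M ^ 2 * ρ⁻¹ := by gcongr
    _ ≤ 55 * (⌊q / δ⌋₊ + 1) ^ 3 * ρ⁻¹ * M ^ 2 := by
      rw [mul_right_comm]
      gcongr
      · norm_num

/-- Lemma 2.2(ii): variation bound for the penalization term
`k^n_t = -n ∫_0^t (x s - Π(x s)) ds`, whose total variation on `[0, q]` equals
`n ∫_0^q ‖x s - Π(x s)‖ ds`. -/
theorem stmt5 (d : ℕ) (D : Set (EuclideanSpace ℝ (Fin d)))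
    (hD : IsOpen D) (hconv : Convex ℝ D) (hne : D.Nonempty)
    (a : EuclideanSpace ℝ (Fin d)) (ha : a ∈ D)
    (proj : EuclideanSpace ℝ (Fin d) → EuclideanSpace ℝ (Fin d))
    (hproj : IsProjOn (closure D) proj)
    (y : ℝ → EuclideanSpace ℝ (Fin d)) (hy : Cadlag y) (hy0 : y 0 ∈ closure D)
    (n : ℕ) (x k : ℝ → EuclideanSpace ℝ (Fin d))
    (hx : PenalizedSol proj (n : ℝ) y x)
    (hk : ∀ t : ℝ, 0 ≤ t → k t = -((n : ℝ) • ∫ s in (0:ℝ)..t, (x s - proj (x s))))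
    (q δ : ℝ) (hq : 0 < q) (hδ : 0 < δ)
    (hω : OmegaPrimeLt y δ q (Metric.infDist a (frontier D) / 2)) :
    (n : ℝ) * ∫ s in (0:ℝ)..q, ‖x s - proj (x s)‖ ≤
      55 * (⌊q / δ⌋₊ + 1) ^ 3 * (Metric.infDist a (frontier D))⁻¹ *
        (⨆ s : Set.Icc (0:ℝ) q, ‖y s - a‖) ^ 2 :=
  stmt5_general d D hD hconv a ha proj hproj y n x hx q δ hδ hω
end

section
/- Let D ⊆ ℝ^d be open convex and y, ŷ càdlàg with y_0, ŷ_0 ∈ closure D. Let x, x̂ solve the respective penalized equations x_t = y_t + k_t, x̂_t = ŷ_t + k̂_t with k_t = -n∫_0^t (x_s - Π(x_s)) ds and k̂_t = -n∫_0^t (x̂_s - Π(x̂_s)) ds. Then for every t ≥ 0, |x_t - x̂_t|² ≤ |y_t - ŷ_t|² + 4 sup_{s ≤ t} |y_s - ŷ_s| (|k|_t + |k̂|_t), where |k|_t, |k̂|_t are total variations on [0,t]. -/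
open scoped RealInnerProductSpace
open MeasureTheory Set Filter

variable {d : ℕ}

/-!
Write `x - x̂ = w + A` with `w = y - ŷ` and `A t = ∫₀ᵗ g`, where `g = n ((x̂ - Π x̂) - (x - Π x))`.
Monotonicity of `z ↦ z - Π z` gives `⟪x - x̂, g⟫ ≤ 0`, hence `⟪A, g⟫ ≤ -⟪w, g⟫ ≤ ‖w‖ ‖g‖`.
As `A` is absolutely continuous, `‖A t‖² = 2 ∫₀ᵗ ⟪A, g⟫ ≤ 2 sup ‖w‖ ∫₀ᵗ ‖g‖`, and the cross term
`2 ⟪w t, A t⟫` of `‖w t + A t‖²` obeys the same bound.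
-/

open scoped Topology

section Projection

variable {E : Type*} [NormedAddCommGroup E] [InnerProductSpace ℝ E] {C : Set E} {proj : E → E}

theorem inner_sub_proj_sub_proj_nonpos (hC : Convex ℝ C)
    (hproj : ∀ z, proj z ∈ C ∧ ∀ w ∈ C, dist z (proj z) ≤ dist z w) (z : E) {w : E}
    (hw : w ∈ C) : ⟪z - proj z, w - proj z⟫ ≤ 0 := by
  obtain ⟨hmem, hmin⟩ := hproj z
  have : Nonempty C := ⟨⟨_, hmem⟩⟩
  refine (norm_eq_iInf_iff_real_inner_le_zero hC hmem).1 (le_antisymm ?_ ?_) w hw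
  · exact le_ciInf fun v => by simpa [dist_eq_norm] using hmin v v.2
  · have hbdd : BddBelow (range fun v : C => ‖z - v‖) :=
      ⟨0, by rintro _ ⟨v, rfl⟩; positivity⟩
    exact ciInf_le hbdd ⟨_, hmem⟩

theorem inner_sub_proj_sub_sub_proj_nonneg (hC : Convex ℝ C)
    (hproj : ∀ z, proj z ∈ C ∧ ∀ w ∈ C, dist z (proj z) ≤ dist z w) (u v : E) :
    0 ≤ ⟪(u - proj u) - (v - proj v), u - v⟫ := by
  have hu := inner_sub_proj_sub_proj_nonpos hC hproj u (hproj v).1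
  have hv := inner_sub_proj_sub_proj_nonpos hC hproj v (hproj u).1
  have hsplit : u - v = ((u - proj u) - (v - proj v)) - (proj v - proj u) := by abel
  have hv' : ⟪v - proj v, proj v - proj u⟫ = -⟪v - proj v, proj u - proj v⟫ := by
    rw [← inner_neg_right, neg_sub]
  rw [hsplit, inner_sub_right, real_inner_self_eq_norm_sq, inner_sub_left, hv']
  nlinarith [sq_nonneg ‖(u - proj u) - (v - proj v)‖]

end Projection

theorem Bornology.IsBounded.image_Icc_of_continuousWithinAt_Ici {X : Type*} [PseudoMetricSpace X]
    {f : ℝ → X} {a b : ℝ} (hright : ∀ t ∈ Icc a b, ContinuousWithinAt f (Ici t) t)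
    (hleft : ∀ t ∈ Ioc a b, ∃ l, Tendsto f (𝓝[<] t) (𝓝 l)) :
    Bornology.IsBounded (f '' Icc a b) := by
  refine isCompact_Icc.induction_on (p := fun s => Bornology.IsBounded (f '' s)) (by simp)
    (fun s t hst ht => ht.subset (image_mono hst))
    (fun s t hs ht => by rw [image_union]; exact hs.union ht) fun t ht => ?_
  have hGE : f ⁻¹' Metric.ball (f t) 1 ∈ 𝓝[≥] t :=
    hright t ht (Metric.ball_mem_nhds _ one_pos)
  rcases ht.1.eq_or_lt with rfl | hat
  · refine ⟨_, nhdsWithin_mono _ (fun s hs => hs.1) hGE, ?_⟩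
    exact Metric.isBounded_ball.subset (image_preimage_subset _ _)
  · obtain ⟨l, hl⟩ := hleft t ⟨hat, ht.2⟩
    have hLT : f ⁻¹' Metric.ball l 1 ∈ 𝓝[<] t := hl (Metric.ball_mem_nhds _ one_pos)
    refine ⟨f ⁻¹' (Metric.ball l 1 ∪ Metric.ball (f t) 1),
      mem_nhdsWithin_of_mem_nhds ?_, ?_⟩
    · rw [← nhdsLT_sup_nhdsGE]
      exact ⟨mem_of_superset hLT fun s hs => Or.inl hs,
        mem_of_superset hGE fun s hs => Or.inr hs⟩
    · exact (Metric.isBounded_ball.union Metric.isBounded_ball).subset (image_preimage_subset _ _)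

theorem IntervalIntegrable.continuousOn_inner {E : Type*} [NormedAddCommGroup E]
    [InnerProductSpace ℝ E] {f g : ℝ → E} {a b : ℝ} (hf : ContinuousOn f (uIcc a b))
    (hg : IntervalIntegrable g volume a b) :
    IntervalIntegrable (fun s => ⟪f s, g s⟫) volume a b := by
  obtain ⟨C, hC⟩ := isCompact_uIcc.exists_bound_of_continuousOn hf
  rw [intervalIntegrable_iff] at hg ⊢
  refine Integrable.mono' (hg.norm.const_mul C) (((hf.mono uIoc_subset_uIcc).aestronglyMeasurable
    measurableSet_uIoc).inner hg.aestronglyMeasurable) ?_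
  refine ae_restrict_of_forall_mem measurableSet_uIoc fun s hs => ?_
  calc ‖⟪f s, g s⟫‖ ≤ ‖f s‖ * ‖g s‖ := norm_inner_le_norm _ _
    _ ≤ C * ‖g s‖ := by gcongr; exact hC s (uIoc_subset_uIcc hs)

theorem two_mul_integral_primitive_mul {h : ℝ → ℝ} {a b : ℝ}
    (hh : IntervalIntegrable h volume a b) :
    2 * ∫ s in a..b, (∫ u in a..s, h u) * h s = (∫ u in a..b, h u) ^ 2 := by
  set F : ℝ → ℝ := fun s => ∫ u in a..s, h u
  have hF : AbsolutelyContinuousOnInterval F a b :=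
    hh.absolutelyContinuousOnInterval_intervalIntegral left_mem_uIcc
  have hderiv : ∫ s in a..b, F s * h s = ∫ s in a..b, F s * deriv F s := by
    refine intervalIntegral.integral_congr_ae ?_
    filter_upwards [hh.ae_hasDerivAt_integral] with s hs hsab
    rw [(hs (uIoc_subset_uIcc hsab) a left_mem_uIcc).deriv]
  have hparts := hF.integral_mul_deriv_eq_deriv_mul hF
  simp only [F, intervalIntegral.integral_same, mul_zero, sub_zero] at hparts
  simp only [mul_comm (deriv _ _)] at hparts
  rw [hderiv]
  linear_combination hparts

theorem norm_intervalIntegral_sq_eq {ι : Type*} [Fintype ι] {g : ℝ → EuclideanSpace ℝ ι}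
    {a b : ℝ} (hg : IntervalIntegrable g volume a b) :
    ‖∫ u in a..b, g u‖ ^ 2 = 2 * ∫ s in a..b, ⟪∫ u in a..s, g u, g s⟫ := by
  have hcoord : ∀ c ∈ uIcc a b, ∀ i, (∫ u in a..c, g u) i = ∫ u in a..c, g u i :=
    fun c hc i => ((EuclideanSpace.proj i).intervalIntegral_comp_comm
      (hg.mono_set (uIcc_subset_uIcc_left hc))).symm
  have hgi : ∀ i, IntervalIntegrable (fun u => g u i) volume a b := fun i =>
    ⟨(EuclideanSpace.proj (𝕜 := ℝ) i).integrable_comp hg.1,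
      (EuclideanSpace.proj (𝕜 := ℝ) i).integrable_comp hg.2⟩
  have hinner : ∫ s in a..b, ⟪∫ u in a..s, g u, g s⟫
      = ∑ i, ∫ s in a..b, (∫ u in a..s, g u i) * g s i := by
    rw [← intervalIntegral.integral_finsetSum fun i _ =>
      (hgi i).continuousOn_mul
        (intervalIntegral.continuousOn_primitive_interval' (hgi i) left_mem_uIcc)]
    refine intervalIntegral.integral_congr fun s hs => ?_
    simp [PiLp.inner_apply, hcoord s hs, mul_comm]
  rw [hinner, Finset.mul_sum, EuclideanSpace.real_norm_sq_eq]
  refine Finset.sum_congr rfl fun i _ => ?_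
  rw [two_mul_integral_primitive_mul (hgi i), hcoord b right_mem_uIcc]

theorem norm_sq_le_of_inner_nonpos {ι : Type*} [Fintype ι] {z w g : ℝ → EuclideanSpace ℝ ι}
    {t M : ℝ} (ht : 0 ≤ t) (hg : IntervalIntegrable g volume 0 t)
    (hz : ∀ s ∈ Icc 0 t, z s = w s + ∫ u in 0..s, g u)
    (hzg : ∀ s ∈ Icc 0 t, ⟪z s, g s⟫ ≤ 0)
    (hw : ∀ s ∈ Icc 0 t, ‖w s‖ ≤ M) :
    ‖z t‖ ^ 2 ≤ ‖w t‖ ^ 2 + 4 * M * ∫ s in 0..t, ‖g s‖ := by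
  set A := fun s => ∫ u in 0..s, g u
  set K := ∫ s in 0..t, ‖g s‖
  have htt : t ∈ Icc 0 t := right_mem_Icc.2 ht
  have hM : 0 ≤ M := (norm_nonneg _).trans (hw t htt)
  have hAK : ‖A t‖ ≤ K := intervalIntegral.norm_integral_le_integral_norm ht
  have hAg : ∀ s ∈ Icc 0 t, ⟪A s, g s⟫ ≤ M * ‖g s‖ := fun s hs => by
    have hAs : A s = z s - w s := by rw [hz s hs]; abel
    rw [hAs, inner_sub_left]
    have hwg := neg_le_of_abs_le (abs_real_inner_le_norm (w s) (g s))
    have hMg := mul_le_mul_of_nonneg_right (hw s hs) (norm_nonneg (g s))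
    linarith [hzg s hs]
  have hAA : ‖A t‖ ^ 2 ≤ 2 * (M * K) := by
    have hcont : ContinuousOn A (uIcc 0 t) :=
      intervalIntegral.continuousOn_primitive_interval' hg left_mem_uIcc
    have := intervalIntegral.integral_mono_on ht (hg.continuousOn_inner hcont)
      (hg.norm.const_mul M) hAg
    rw [intervalIntegral.integral_const_mul] at this
    rw [norm_intervalIntegral_sq_eq hg]
    linarith
  have hwA : ⟪w t, A t⟫ ≤ M * K := (real_inner_le_norm _ _).trans (by gcongr; exact hw t htt)
  calc ‖z t‖ ^ 2 = ‖w t‖ ^ 2 + 2 * ⟪w t, A t⟫ + ‖A t‖ ^ 2 := by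
        rw [hz t htt, norm_add_sq_real]
    _ ≤ ‖w t‖ ^ 2 + 4 * M * K := by linarith

theorem intervalIntegral.integral_norm_smul_sub_le {E : Type*} [NormedAddCommGroup E]
    [NormedSpace ℝ E] {f g : ℝ → E} {c a b : ℝ} (hc : 0 ≤ c) (hab : a ≤ b)
    (hf : IntervalIntegrable f volume a b) (hg : IntervalIntegrable g volume a b) :
    ∫ s in a..b, ‖c • (g s - f s)‖
      ≤ c * (∫ s in a..b, ‖f s‖) + c * ∫ s in a..b, ‖g s‖ := by
  rw [← integral_const_mul, ← integral_const_mul,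
    ← integral_add (hf.norm.const_mul _) (hg.norm.const_mul _)]
  refine integral_mono_on hab ((hg.sub hf).smul c).norm
    ((hf.norm.const_mul _).add (hg.norm.const_mul _)) fun s _ => ?_
  rw [norm_smul, Real.norm_of_nonneg hc]
  exact (mul_le_mul_of_nonneg_left (norm_sub_le _ _) hc).trans_eq (by ring)

theorem Cadlag.isBounded_image_Icc {f : ℝ → EuclideanSpace ℝ (Fin d)} (hf : Cadlag f)
    (T : ℝ) :
    Bornology.IsBounded (f '' Icc 0 T) :=
  .image_Icc_of_continuousWithinAt_Ici (fun t ht => hf.1 t ht.1) (fun t ht => hf.2 t ht.1)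

theorem Cadlag.norm_sub_le_iSup {y yh : ℝ → EuclideanSpace ℝ (Fin d)} (hy : Cadlag y)
    (hyh : Cadlag yh) {s t : ℝ} (hs : s ∈ Icc 0 t) :
    ‖y s - yh s‖ ≤ ⨆ r : Icc (0:ℝ) t, ‖y r - yh r‖ := by
  obtain ⟨C, hC⟩ := (hy.isBounded_image_Icc t).exists_norm_le
  obtain ⟨Ch, hCh⟩ := (hyh.isBounded_image_Icc t).exists_norm_le
  refine le_ciSup (f := fun r : Icc (0:ℝ) t => ‖y r - yh r‖) ⟨C + Ch, ?_⟩ ⟨s, hs⟩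
  rintro _ ⟨⟨r, hr⟩, rfl⟩
  exact (norm_sub_le _ _).trans (add_le_add (hC _ (mem_image_of_mem y hr))
    (hCh _ (mem_image_of_mem yh hr)))

theorem PenalizedSol.sub_eq_add_integral
    {proj : EuclideanSpace ℝ (Fin d) → EuclideanSpace ℝ (Fin d)} {c : ℝ}
    {y yh x xh : ℝ → EuclideanSpace ℝ (Fin d)} (hx : PenalizedSol proj c y x)
    (hxh : PenalizedSol proj c yh xh) {s : ℝ} (hs : 0 ≤ s) :
    x s - xh s
      = (y s - yh s) + ∫ u in 0..s, c • ((xh u - proj (xh u)) - (x u - proj (x u))) := by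
  rw [hx.2 s hs, hxh.2 s hs, intervalIntegral.integral_smul,
    intervalIntegral.integral_sub (hxh.1 s hs) (hx.1 s hs), smul_sub]
  abel

theorem stmt17_general (d : ℕ) (D : Set (EuclideanSpace ℝ (Fin d)))
    (hconv : Convex ℝ D)
    (proj : EuclideanSpace ℝ (Fin d) → EuclideanSpace ℝ (Fin d))
    (hproj : IsProjOn (closure D) proj)
    (n : ℕ) (y yh x xh : ℝ → EuclideanSpace ℝ (Fin d))
    (hy : Cadlag y) (hyh : Cadlag yh)
    (hx : PenalizedSol proj (n : ℝ) y x)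
    (hxh : PenalizedSol proj (n : ℝ) yh xh) :
    ∀ t : ℝ, 0 ≤ t →
      ‖x t - xh t‖ ^ 2 ≤ ‖y t - yh t‖ ^ 2 +
        4 * (⨆ s : Set.Icc (0:ℝ) t, ‖y s - yh s‖) *
          ((n : ℝ) * (∫ s in (0:ℝ)..t, ‖x s - proj (x s)‖) +
           (n : ℝ) * ∫ s in (0:ℝ)..t, ‖xh s - proj (xh s)‖) := by
  intro t ht
  set P := fun s => x s - proj (x s)
  set Ph := fun s => xh s - proj (xh s)
  have hP : IntervalIntegrable P volume 0 t := hx.1 t ht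
  have hPh : IntervalIntegrable Ph volume 0 t := hxh.1 t ht
  have hg : IntervalIntegrable (fun s => (n : ℝ) • (Ph s - P s)) volume 0 t :=
    (hPh.sub hP).smul (n : ℝ)
  have hsign : ∀ s, ⟪x s - xh s, (n : ℝ) • (Ph s - P s)⟫ ≤ 0 := fun s => by
    have hmono := inner_sub_proj_sub_sub_proj_nonneg hconv.closure hproj (x s) (xh s)
    rw [real_inner_smul_right, ← neg_sub (P s), inner_neg_right, real_inner_comm]
    exact mul_nonpos_of_nonneg_of_nonpos n.cast_nonneg (neg_nonpos.2 hmono)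
  have hM : 0 ≤ ⨆ s : Icc (0:ℝ) t, ‖y s - yh s‖ :=
    (norm_nonneg _).trans (hy.norm_sub_le_iSup hyh (right_mem_Icc.2 ht))
  refine (norm_sq_le_of_inner_nonpos ht hg (fun s hs => hx.sub_eq_add_integral hxh hs.1)
    (fun s _ => hsign s) (fun s hs => hy.norm_sub_le_iSup hyh hs)).trans ?_
  gcongr
  exact intervalIntegral.integral_norm_smul_sub_le n.cast_nonneg ht hP hPh

/-- Lemma 2.2(i) of [laus]: comparison of two penalized solutions. -/
theorem stmt17 (d : ℕ) (D : Set (EuclideanSpace ℝ (Fin d)))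
    (hD : IsOpen D) (hconv : Convex ℝ D) (hne : D.Nonempty)
    (proj : EuclideanSpace ℝ (Fin d) → EuclideanSpace ℝ (Fin d))
    (hproj : IsProjOn (closure D) proj)
    (n : ℕ) (y yh x xh : ℝ → EuclideanSpace ℝ (Fin d))
    (hy : Cadlag y) (hyh : Cadlag yh)
    (hy0 : y 0 ∈ closure D) (hyh0 : yh 0 ∈ closure D)
    (hx : PenalizedSol proj (n : ℝ) y x)
    (hxh : PenalizedSol proj (n : ℝ) yh xh) :
    ∀ t : ℝ, 0 ≤ t →
      ‖x t - xh t‖ ^ 2 ≤ ‖y t - yh t‖ ^ 2 +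
        4 * (⨆ s : Set.Icc (0:ℝ) t, ‖y s - yh s‖) *
          ((n : ℝ) * (∫ s in (0:ℝ)..t, ‖x s - proj (x s)‖) +
           (n : ℝ) * ∫ s in (0:ℝ)..t, ‖xh s - proj (xh s)‖) :=
  stmt17_general d D hconv proj hproj n y yh x xh hy hyh hx hxh
end
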